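/- arXiv:1402.0402 — 2 statements merged into one kernel-verified Lean document; each statement's English description precedes it below -/
import Mathlib

section
/- Let u and v be distinct vertices of G and let P be a path in G from u to v such that every internal vertex of P has rank strictly smaller than both π⁻¹(u) and π⁻¹(v). Then {u,v} is an edge of the contraction hierarchy G*π. -/
/-!
Contracting, one after the other, the vertices of rank below `min (rk π u) (rk π v)`
shrinks `P` through shortcuts to the single edge `u v`; the remaining contractions only
add edges.
-/

open SimpleGraph
open scoped ENNReal

variable {V : Type*}

/-- One step of vertex contraction: remove `v` from the current graph and add an edge
between every pair of its current neighbors. -/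
def chStep (H : SimpleGraph V) (v : V) : SimpleGraph V where
  Adj a b := a ≠ b ∧ a ≠ v ∧ b ≠ v ∧ (H.Adj a b ∨ (H.Adj v a ∧ H.Adj v b))
  symm := ⟨by
    rintro a b ⟨h1, h2, h3, h4⟩
    refine ⟨h1.symm, h3, h2, ?_⟩
    rcases h4 with h | ⟨ha, hb⟩
    · exact Or.inl h.symm
    · exact Or.inr ⟨hb, ha⟩⟩
  loopless := ⟨fun a h => h.1 rfl⟩

/-- All edges ever present while contracting the vertices of the list in order:
the edges of the initial graph together with all added shortcuts. -/
def chList : SimpleGraph V → List V → SimpleGraph V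
  | H, [] => H
  | H, v :: l => H ⊔ chList (chStep H v) l

/-- The rank of a vertex with respect to the contraction order `π`. -/
def rk {n : ℕ} (π : Fin n ≃ V) (v : V) : ℕ := (π.symm v : ℕ)

/-- The contraction hierarchy `G*π`: contract `π 0, π 1, …` in this order and collect
all original edges and all added shortcuts. -/
def chGraph {n : ℕ} (G : SimpleGraph V) (π : Fin n ≃ V) : SimpleGraph V :=
  chList G ((List.finRange n).map ⇑π)

/-- A list of vertices is up-down w.r.t. a rank function: ranks strictly increase
along a prefix and strictly decrease along the remaining suffix, the two parts
meeting at the maximum-rank vertex. -/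
def IsUpDown (r : V → ℕ) (l : List V) : Prop :=
  ∃ l₁ x l₂, l = l₁ ++ x :: l₂ ∧
    List.Chain' (fun a b => r a < r b) (l₁ ++ [x]) ∧
    List.Chain' (fun a b => r b < r a) (x :: l₂)

/-- Reachability in the upward directed graph `G^∧π` (edges of `G*π` directed from
lower to higher rank): the vertex set of the search space `SS v`. -/
def UpReach {n : ℕ} (G : SimpleGraph V) (π : Fin n ≃ V) (v u : V) : Prop :=
  Relation.ReflTransGen (fun a b => (chGraph G π).Adj a b ∧ rk π a < rk π b) v u

/-- Length of a walk: the sum of the weights of its edges. -/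
noncomputable def wlen {H : SimpleGraph V} (m : V → V → ℝ≥0∞) {s t : V}
    (p : H.Walk s t) : ℝ≥0∞ :=
  (p.darts.map (fun d => m d.toProd.1 d.toProd.2)).sum

/-- Shortest path distance in a graph `H` under edge weights `m`. -/
noncomputable def gdist (H : SimpleGraph V) (m : V → V → ℝ≥0∞) (s t : V) : ℝ≥0∞ :=
  ⨅ (p : H.Walk s t), wlen m p

/-- Minimum length of an up-down `s`-`t` path in `G*π`. -/
noncomputable def updist {n : ℕ} (G : SimpleGraph V) (π : Fin n ≃ V)
    (m : V → V → ℝ≥0∞) (s t : V) : ℝ≥0∞ :=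
  ⨅ (p : (chGraph G π).Walk s t) (_ : IsUpDown (rk π) p.support), wlen m p

/-- Minimum length of a strictly rank-increasing `u`-`v` path in `G*π`. -/
noncomputable def upOnlyDist {n : ℕ} (G : SimpleGraph V) (π : Fin n ≃ V)
    (m : V → V → ℝ≥0∞) (u v : V) : ℝ≥0∞ :=
  ⨅ (p : (chGraph G π).Walk u v)
    (_ : List.Chain' (fun a b => rk π a < rk π b) p.support), wlen m p

/-- `S` is a balanced separator of the subgraph of `G` induced by `U`. -/
def IsBalancedSepOn [DecidableEq V] (G : SimpleGraph V) (U S : Finset V) : Prop :=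
  S ⊆ U ∧ ∃ A B : Finset V, A ⊆ U ∧ B ⊆ U ∧
    Disjoint A B ∧ Disjoint A S ∧ Disjoint B S ∧ A ∪ B ∪ S = U ∧
    (∀ a ∈ A, ∀ b ∈ B, ¬ G.Adj a b) ∧
    3 * A.card ≤ 2 * U.card ∧ 3 * B.card ≤ 2 * U.card

/-- Nested dissection orders (as lists, earliest contracted first, separator last)
of induced subgraphs of `G`, in which the separator chosen at every recursion step on
a `k`-vertex subgraph is balanced and has cardinality at most `c * k ^ α`. -/
inductive IsNDOrder [DecidableEq V] (G : SimpleGraph V) (c α : ℝ) : Finset V → List V → Prop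
  | empty : IsNDOrder G c α ∅ []
  | step {U S A B : Finset V} {lA lB lS : List V} :
      Disjoint A B → Disjoint A S → Disjoint B S → A ∪ B ∪ S = U →
      (∀ a ∈ A, ∀ b ∈ B, ¬ G.Adj a b) →
      3 * A.card ≤ 2 * U.card → 3 * B.card ≤ 2 * U.card →
      ((S.card : ℝ) ≤ c * (U.card : ℝ) ^ α) →
      lS.Nodup → lS.toFinset = S →
      IsNDOrder G c α A lA → IsNDOrder G c α B lB →
      IsNDOrder G c α U (lA ++ lB ++ lS)

/-- Number of vertices of the search space `SS v` in `G^∧π`. -/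
noncomputable def nVertsSS {n : ℕ} (G : SimpleGraph V) (π : Fin n ≃ V) (v : V) : ℕ :=
  {u | UpReach G π v u}.ncard

/-- Number of arcs of the search space `SS v` in `G^∧π`: arcs of `G^∧π` with both
endpoints reachable from `v`. -/
noncomputable def nArcsSS {n : ℕ} (G : SimpleGraph V) (π : Fin n ≃ V) (v : V) : ℕ :=
  {q : V × V | (chGraph G π).Adj q.1 q.2 ∧ rk π q.1 < rk π q.2 ∧
    UpReach G π v q.1 ∧ UpReach G π v q.2}.ncard

/-- The rank sequence of a walk: for each edge, the minimum of the ranks of its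
endpoints, sorted in decreasing order. -/
def rankSeq {H : SimpleGraph V} (r : V → ℕ) {s t : V} (p : H.Walk s t) : List ℕ :=
  (p.darts.map (fun d => min (r d.toProd.1) (r d.toProd.2))).insertionSort (· ≥ ·)

/-- Directed length of a walk in `G*π` under a pair of directed metrics `(mu, md)`:
each edge traversed from lower rank to higher rank costs its upward weight,
each edge traversed from higher rank to lower rank costs its downward weight. -/
noncomputable def dlen {H : SimpleGraph V} (r : V → ℕ) (mu md : V → V → ℝ≥0∞)
    {s t : V} (p : H.Walk s t) : ℝ≥0∞ :=
  (p.darts.map (fun d =>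
    if r d.toProd.1 < r d.toProd.2 then mu d.toProd.1 d.toProd.2
    else md d.toProd.2 d.toProd.1)).sum

/-- Length of a directed walk `s :: l` under arc weights `wD`. -/
noncomputable def dWalkLen (wD : V → V → ℝ≥0∞) : V → List V → ℝ≥0∞
  | _, [] => 0
  | s, x :: l => wD s x + dWalkLen wD x l

/-- Shortest directed path distance in the directed graph `D` under arc weights `wD`. -/
noncomputable def ddist (D : V → V → Prop) (wD : V → V → ℝ≥0∞) (s t : V) : ℝ≥0∞ :=
  ⨅ (l : List V) (_ : List.Chain D s l ∧ l.getLastD s = t), dWalkLen wD s l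

lemma chStep_adj {H : SimpleGraph V} {w a b : V} :
    (chStep H w).Adj a b ↔ a ≠ b ∧ a ≠ w ∧ b ≠ w ∧ (H.Adj a b ∨ (H.Adj w a ∧ H.Adj w b)) :=
  Iff.rfl

lemma le_chList (H : SimpleGraph V) : ∀ l : List V, H ≤ chList H l
  | [] => le_rfl
  | _ :: _ => le_sup_left

lemma chList_le_chList_append (H : SimpleGraph V) (l l' : List V) :
    chList H l ≤ chList H (l ++ l') := by
  induction l generalizing H with
  | nil => exact le_chList H l'
  | cons w l ih => exact sup_le_sup_left (ih _) H

/-- A walk avoiding `w` at its ends survives the contraction of `w`: each passage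
`a - w - b` is replaced by the shortcut `a - b`, or dropped when `a = b`. -/
theorem exists_chStep_walk {H : SimpleGraph V} {w : V} :
    ∀ {u v : V} (P : H.Walk u v), u ≠ w → v ≠ w →
      ∃ Q : (chStep H w).Walk u v, ∀ x ∈ Q.support, x ∈ P.support ∧ x ≠ w
  | _, _, .nil, hu, _ => ⟨.nil, by simpa using hu⟩
  | u, v, .cons (v := x) hux P, hu, hv => by
    by_cases hxw : x = w
    · subst hxw
      cases P with
      | nil => exact absurd rfl hv
      | @cons _ y _ hxy P =>
        obtain ⟨Q, hQ⟩ := exists_chStep_walk P (H.ne_of_adj hxy).symm hv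
        by_cases huy : u = y
        · subst huy
          exact ⟨Q, fun z hz => ⟨by simp [(hQ z hz).1], (hQ z hz).2⟩⟩
        · have hshortcut : (chStep H x).Adj u y :=
            chStep_adj.mpr ⟨huy, hu, (H.ne_of_adj hxy).symm, Or.inr ⟨hux.symm, hxy⟩⟩
          refine ⟨.cons hshortcut Q, ?_⟩
          rw [Walk.support_cons, List.forall_mem_cons]
          exact ⟨⟨by simp, hu⟩, fun z hz => ⟨by simp [(hQ z hz).1], (hQ z hz).2⟩⟩
    · obtain ⟨Q, hQ⟩ := exists_chStep_walk P hxw hv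
      refine ⟨.cons (chStep_adj.mpr ⟨H.ne_of_adj hux, hu, hxw, Or.inl hux⟩) Q, ?_⟩
      rw [Walk.support_cons, List.forall_mem_cons]
      exact ⟨⟨by simp, hu⟩, fun z hz => ⟨by simp [(hQ z hz).1], (hQ z hz).2⟩⟩

theorem chList_adj_of_walk (l : List V) (H : SimpleGraph V) {u v : V} (huv : u ≠ v)
    (hu : u ∉ l) (hv : v ∉ l) (P : H.Walk u v)
    (hint : ∀ x ∈ P.support, x ≠ u → x ≠ v → x ∈ l) : (chList H l).Adj u v := by
  induction l generalizing H with
  | nil =>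
    cases P with
    | nil => exact absurd rfl huv
    | @cons _ x _ hux P =>
      by_cases hxv : x = v
      · exact hxv ▸ hux
      · exact absurd (hint x (by simp) (H.ne_of_adj hux).symm hxv) List.not_mem_nil
  | cons w l ih =>
    rw [List.mem_cons, not_or] at hu hv
    obtain ⟨Q, hQ⟩ := exists_chStep_walk P hu.1 hv.1
    refine Or.inr (ih (chStep H w) hu.2 hv.2 Q fun x hx hxu hxv => ?_)
    exact (List.mem_cons.mp (hint x (hQ x hx).1 hxu hxv)).resolve_left (hQ x hx).2

lemma mem_take_finRange {n : ℕ} (k : ℕ) (i : Fin n) :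
    i ∈ (List.finRange n).take k ↔ (i : ℕ) < k := by
  rw [List.mem_take_iff_idxOf_lt (List.mem_finRange i), List.idxOf_finRange]

lemma mem_take_map_finRange {n : ℕ} (π : Fin n ≃ V) (k : ℕ) (x : V) :
    x ∈ ((List.finRange n).map π).take k ↔ rk π x < k := by
  conv_lhs => rw [← π.apply_symm_apply x, ← List.map_take]
  rw [List.mem_map_of_injective π.injective, mem_take_finRange, rk]

theorem stmt0_general {V : Type*} {n : ℕ} (G : SimpleGraph V)
    (π : Fin n ≃ V) (u v : V) (huv : u ≠ v)
    (P : G.Walk u v)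
    (hint : ∀ x ∈ P.support, x ≠ u → x ≠ v → rk π x < rk π u ∧ rk π x < rk π v) :
    (chGraph G π).Adj u v := by
  set L := (List.finRange n).map π
  set k := min (rk π u) (rk π v)
  have hbelow : (chList G (L.take k)).Adj u v := by
    refine chList_adj_of_walk _ G huv ?_ ?_ P fun x hx hxu hxv => ?_ <;>
      rw [mem_take_map_finRange]
    · exact (min_le_left _ _).not_gt
    · exact (min_le_right _ _).not_gt
    · exact lt_min_iff.mpr (hint x hx hxu hxv)
  have hmono := chList_le_chList_append G (L.take k) (L.drop k)
  rw [List.take_append_drop] at hmono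
  exact hmono hbelow

/-- If `P` is a `u`-`v` path in `G` all of whose internal vertices have
rank strictly smaller than both the rank of `u` and the rank of `v`, then `{u, v}`
is an edge of the contraction hierarchy `G*π`. -/
theorem stmt0 {V : Type*} {n : ℕ} (G : SimpleGraph V) (hG : G.Connected)
    (π : Fin n ≃ V) (u v : V) (huv : u ≠ v)
    (P : G.Walk u v) (hP : P.IsPath)
    (hint : ∀ x ∈ P.support, x ≠ u → x ≠ v → rk π x < rk π u ∧ rk π x < rk π v) :
    (chGraph G π).Adj u v :=
  stmt0_general G π u v huv P hint
end

section
/- Let G be connected and let S be a minimum balanced separator of G. Then for every contraction order π there exists a set C of at least |S| vertices that forms a clique in G*π, together with a set W of at least n/3 vertices, such that for every v ∈ W every vertex of C lies in the search space SS(v) in G^∧π (and consequently every arc of G^∧π between two vertices of C lies in SS(v)). -/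
open SimpleGraph
open scoped ENNReal

variable {V : Type*}

/-!
Every contraction order `π` is a perfect elimination order of `G*π`: when a vertex is
contracted, all of its higher neighbours become pairwise adjacent. Consequently, a
`G`-walk ending at `x` whose vertices all have rank at most that of `x` can be turned into
an upward path, so its start reaches `x` in `G^∧π`. In particular every vertex reaches the
top vertex, and we may take `x` of minimum rank that is reached from a set `W` of at least
`n / 3` vertices. Let `C` be `x` together with its higher neighbours, a clique of `G*π`
contained in every `SS v` with `v ∈ W`. Every `G`-neighbour of `W` lies in `W ∪ C`, and a
component of `G[W \ {x}]` with top vertex `y` lies in the set reaching `y`, so it has fewer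
than `n / 3` vertices by minimality of `x`. Packing such components greedily yields a side
`A` of size between `n / 3` and `2n / 3` (or all of `W \ {x}`), which makes `C` a
balanced separator; hence `|S| ≤ |C|`.
-/

section Contraction

lemma chList_not_adj_of_isolated {c : V} :
    ∀ (l : List V) (H : SimpleGraph V), (∀ a, ¬ H.Adj c a) → ∀ a, ¬ (chList H l).Adj c a
  | [], _, hH, a => hH a
  | v :: l, H, hH, a => by
    rw [chList, SimpleGraph.sup_adj]
    rintro (h | h)
    · exact hH a h
    · refine chList_not_adj_of_isolated l (chStep H v) ?_ a h
      rintro b ⟨-, -, -, h | ⟨h, -⟩⟩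
      exacts [hH b h, hH v h.symm]

lemma chList_cons_adj_of_ne {H : SimpleGraph V} {v a b : V} {l : List V}
    (h : (chList H (v :: l)).Adj a b) (ha : a ≠ v) (hb : b ≠ v) :
    (chList (chStep H v) l).Adj a b := by
  rw [chList, SimpleGraph.sup_adj] at h
  exact h.elim (fun h => le_chList _ _ ⟨h.ne, ha, hb, Or.inl h⟩) id

lemma chList_adj_of_lower_common_neighbor (r : V → ℕ) {c u w : V} :
    ∀ (l : List V) (H : SimpleGraph V), l.Pairwise (fun a b => r a < r b) → c ∈ l →
      (chList H l).Adj c u → (chList H l).Adj c w → r c < r u → r c < r w → u ≠ w →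
      (chList H l).Adj u w
  | [], _, _, hc, _, _, _, _, _ => absurd hc List.not_mem_nil
  | v :: l, H, hl, hc, hcu, hcw, hu, hw, huw => by
    rw [chList, SimpleGraph.sup_adj]
    right
    rcases eq_or_ne c v with rfl | hcv
    · -- once contracted, `c` is isolated, so all its edges in the hierarchy are edges of `H`
      have hH : ∀ {a}, (chList H (c :: l)).Adj c a → H.Adj c a := fun h =>
        ((SimpleGraph.sup_adj _ _ _ _).mp h).resolve_right
          (chList_not_adj_of_isolated l (chStep H c) (fun _ h => h.2.1 rfl) _)
      exact le_chList _ _ ⟨huw, ne_of_apply_ne r hu.ne', ne_of_apply_ne r hw.ne',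
        Or.inr ⟨hH hcu, hH hcw⟩⟩
    · obtain ⟨hvl, hl⟩ := List.pairwise_cons.mp hl
      have hcl : c ∈ l := (List.mem_cons.mp hc).resolve_left hcv
      have hvc := hvl c hcl
      have huv : u ≠ v := by rintro rfl; omega
      have hwv : w ≠ v := by rintro rfl; omega
      exact chList_adj_of_lower_common_neighbor r l _ hl hcl
        (chList_cons_adj_of_ne hcu hcv huv) (chList_cons_adj_of_ne hcw hcv hwv) hu hw huw

end Contraction

structure IsPerfectEliminationOrder (Γ : SimpleGraph V) (r : V → ℕ) : Prop where
  injective : Function.Injective r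
  isClique_upper : ∀ v, Γ.IsClique {u | Γ.Adj v u ∧ r v < r u}

section ChGraph

variable {n : ℕ}

lemma le_chGraph (G : SimpleGraph V) (π : Fin n ≃ V) : G ≤ chGraph G π :=
  le_chList G _

lemma rk_injective (π : Fin n ≃ V) : Function.Injective (rk π) :=
  Fin.val_injective.comp π.symm.injective

lemma isPerfectEliminationOrder_chGraph (G : SimpleGraph V) (π : Fin n ≃ V) :
    IsPerfectEliminationOrder (chGraph G π) (rk π) where
  injective := rk_injective π
  isClique_upper c u hu w hw huw := by
    have hsorted : ((List.finRange n).map π).Pairwise (fun a b => rk π a < rk π b) := by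
      simpa [List.pairwise_map, rk] using List.pairwise_lt_finRange n
    have hc : c ∈ (List.finRange n).map π :=
      List.mem_map.mpr ⟨π.symm c, List.mem_finRange _, π.apply_symm_apply c⟩
    exact chList_adj_of_lower_common_neighbor (rk π) _ G hsorted hc hu.1 hw.1 hu.2 hw.2 huw

end ChGraph

/-- `UpReach G π` is `Ascends (chGraph G π) (rk π)`. -/
def Ascends (Γ : SimpleGraph V) (r : V → ℕ) : V → V → Prop :=
  Relation.ReflTransGen (fun a b => Γ.Adj a b ∧ r a < r b)

section Ascends

variable {G Γ : SimpleGraph V} {r : V → ℕ}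

lemma Ascends.rank_le {a b : V} (h : Ascends Γ r a b) : r a ≤ r b := by
  induction h with
  | refl => exact le_rfl
  | tail _ hbc ih => exact ih.trans hbc.2.le

lemma Ascends.ascends_or_upper_of_adj (hΓ : IsPerfectEliminationOrder Γ r) {w x b : V}
    (hw : Ascends Γ r w x) (hwb : Γ.Adj w b) :
    Ascends Γ r b x ∨ (Γ.Adj x b ∧ r x < r b) := by
  induction hw using Relation.ReflTransGen.head_induction_on with
  | refl =>
    rcases lt_or_gt_of_ne (hΓ.injective.ne hwb.ne.symm) with h | h
    · exact Or.inl (.single ⟨hwb.symm, h⟩)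
    · exact Or.inr ⟨hwb, h⟩
  | @head w c hwc hcx ih =>
    rcases lt_or_gt_of_ne (hΓ.injective.ne hwb.ne.symm) with h | h
    · exact Or.inl (.head ⟨hwb.symm, h⟩ (.head hwc hcx))
    rcases eq_or_ne c b with rfl | hcb
    · exact Or.inl hcx
    · exact ih (hΓ.isClique_upper w hwc ⟨hwb, h⟩ hcb)

lemma ascends_of_walk (hΓ : IsPerfectEliminationOrder Γ r) (hle : G ≤ Γ) {a b : V}
    (p : G.Walk a b) (hp : ∀ u ∈ p.support, r u ≤ r b) : Ascends Γ r a b := by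
  induction p with
  | nil => exact .refl
  | @cons a c b hac q ih =>
    have hcb := ih fun u hu => hp u (List.mem_cons_of_mem a hu)
    refine (hcb.ascends_or_upper_of_adj hΓ (hle hac.symm)).resolve_right ?_
    rintro ⟨-, h⟩
    exact absurd (hp a (List.mem_cons_self ..)) (not_le.mpr h)

end Ascends

def ReachableWithin (G : SimpleGraph V) (s : Set V) (a b : V) : Prop :=
  ∃ p : G.Walk a b, ∀ u ∈ p.support, u ∈ s

namespace ReachableWithin

variable {G : SimpleGraph V} {s : Set V} {a b c : V}

lemma refl (ha : a ∈ s) : ReachableWithin G s a a :=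
  ⟨.nil, by simpa using ha⟩

lemma of_adj (ha : a ∈ s) (hb : b ∈ s) (h : G.Adj a b) : ReachableWithin G s a b :=
  ⟨.cons h .nil, by simp [ha, hb]⟩

lemma symm (h : ReachableWithin G s a b) : ReachableWithin G s b a := by
  obtain ⟨p, hp⟩ := h
  exact ⟨p.reverse, by simpa using hp⟩

lemma trans (hab : ReachableWithin G s a b) (hbc : ReachableWithin G s b c) :
    ReachableWithin G s a c := by
  obtain ⟨p, hp⟩ := hab
  obtain ⟨q, hq⟩ := hbc
  refine ⟨p.append q, fun u hu => ?_⟩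
  rw [SimpleGraph.Walk.mem_support_append_iff] at hu
  exact hu.elim (hp u) (hq u)

lemma mem_right (h : ReachableWithin G s a b) : b ∈ s :=
  h.elim fun p hp => hp b p.end_mem_support

lemma of_mem_support {p : G.Walk a b} (hp : ∀ u ∈ p.support, u ∈ s) {u : V}
    (hu : u ∈ p.support) : ReachableWithin G s a u := by
  classical
  exact ⟨p.takeUntil u hu, fun v hv => hp v (p.support_takeUntil_subset_support hu hv)⟩

end ReachableWithin

/-- A largest `R`-closed subset of `s` with at most `L` elements. -/
lemma Finset.exists_closed_subset_card_le {α : Type*} [DecidableEq α] (s : Finset α)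
    (R : α → α → Prop) [DecidableRel R] (hrefl : ∀ b ∈ s, R b b)
    (htrans : ∀ a b c, R a b → R b c → R a c)
    (L m : ℕ) (hcls : ∀ b ∈ s, (s.filter (R b)).card ≤ m) :
    ∃ A ⊆ s, (∀ a ∈ A, ∀ b ∈ s, R a b → b ∈ A) ∧ A.card ≤ L ∧ (A = s ∨ L < A.card + m) := by
  set IsClosed : Finset α → Prop := fun A => ∀ a ∈ A, ∀ b ∈ s, R a b → b ∈ A
  have hcand : (s.powerset.filter fun A => IsClosed A ∧ A.card ≤ L).Nonempty :=
    ⟨∅, by simp [IsClosed]⟩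
  obtain ⟨A, hA, hAmax⟩ := Finset.exists_max_image _ Finset.card hcand
  simp only [Finset.mem_filter, Finset.mem_powerset] at hA hAmax
  obtain ⟨hAs, hAcl, hAL⟩ := hA
  refine ⟨A, hAs, hAcl, hAL, or_iff_not_imp_left.mpr fun hne => ?_⟩
  obtain ⟨b, hbs, hbA⟩ := Finset.exists_of_ssubset (Finset.ssubset_iff_subset_ne.mpr ⟨hAs, hne⟩)
  by_contra! hsmall
  set K := s.filter (R b)
  have hbK : b ∈ K := Finset.mem_filter.mpr ⟨hbs, hrefl b hbs⟩
  have hlt : A.card < (A ∪ K).card :=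
    Finset.card_lt_card (Finset.ssubset_iff_subset_ne.mpr ⟨Finset.subset_union_left,
      fun h => hbA (h ▸ Finset.mem_union_right A hbK)⟩)
  have hAK : IsClosed (A ∪ K) := by
    intro a ha d hd had
    rcases Finset.mem_union.mp ha with ha | ha
    · exact Finset.mem_union_left K (hAcl a ha d hd had)
    · exact Finset.mem_union_right A
        (Finset.mem_filter.mpr ⟨hd, htrans _ _ _ (Finset.mem_filter.mp ha).2 had⟩)
  have hK : K.card ≤ m := hcls b hbs
  have := hAmax (A ∪ K) ⟨Finset.union_subset hAs (Finset.filter_subset _ _), hAK,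
    (Finset.card_union_le A K).trans (by omega)⟩
  omega

lemma isBalancedSepOn_univ_of_closed [Fintype V] [DecidableEq V] {G : SimpleGraph V}
    {A C : Finset V} (hAC : Disjoint A C) (hA : ∀ a ∈ A, ∀ b, G.Adj a b → b ∈ A ∪ C)
    (hA_card : 3 * A.card ≤ 2 * Fintype.card V)
    (hB_card : 3 * (Finset.univ \ (A ∪ C)).card ≤ 2 * Fintype.card V) :
    IsBalancedSepOn G Finset.univ C := by
  refine ⟨Finset.subset_univ C, A, Finset.univ \ (A ∪ C), Finset.subset_univ A,
    Finset.subset_univ _, ?_, hAC, ?_, ?_, ?_, hA_card, hB_card⟩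
  · exact Finset.disjoint_sdiff.mono_left Finset.subset_union_left
  · exact Finset.sdiff_disjoint.mono_right Finset.subset_union_right
  · ext v
    simp only [Finset.mem_union, Finset.mem_sdiff, Finset.mem_univ, true_and, iff_true]
    tauto
  · intro a ha b hb hab
    exact (Finset.mem_sdiff.mp hb).2 (hA a ha b hab)

section Separator

variable [Fintype V] {G Γ : SimpleGraph V} {r : V → ℕ}

open Classical in
/-- The vertices whose search space contains `x`. -/
noncomputable def ascendersTo (Γ : SimpleGraph V) (r : V → ℕ) (x : V) : Finset V :=
  Finset.univ.filter (Ascends Γ r · x)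

open Classical in
noncomputable def upperNeighborFinset (Γ : SimpleGraph V) (r : V → ℕ) (x : V) : Finset V :=
  Finset.univ.filter fun u => Γ.Adj x u ∧ r x < r u

@[simp]
lemma mem_ascendersTo {x w : V} : w ∈ ascendersTo Γ r x ↔ Ascends Γ r w x := by
  simp [ascendersTo]

@[simp]
lemma mem_upperNeighborFinset {x u : V} :
    u ∈ upperNeighborFinset Γ r x ↔ Γ.Adj x u ∧ r x < r u := by
  simp [upperNeighborFinset]

lemma coe_upperNeighborFinset (x : V) :
    (upperNeighborFinset Γ r x : Set V) = {u | Γ.Adj x u ∧ r x < r u} := by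
  ext; simp

lemma exists_minimal_third_ascendersTo (hΓ : IsPerfectEliminationOrder Γ r) (hle : G ≤ Γ)
    (hG : G.Connected) :
    ∃ x, Fintype.card V ≤ 3 * (ascendersTo Γ r x).card ∧
      ∀ y, r y < r x → 3 * (ascendersTo Γ r y).card < Fintype.card V := by
  classical
  have := hG.nonempty
  obtain ⟨t, -, ht⟩ := Finset.exists_max_image Finset.univ r Finset.univ_nonempty
  have htop : ascendersTo Γ r t = Finset.univ := Finset.eq_univ_of_forall fun w =>
    mem_ascendersTo.mpr (ascends_of_walk hΓ hle (hG.preconnected w t).some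
      fun u _ => ht u (Finset.mem_univ u))
  have hcand : (Finset.univ.filter fun v =>
      Fintype.card V ≤ 3 * (ascendersTo Γ r v).card).Nonempty :=
    ⟨t, by simp [htop]; omega⟩
  obtain ⟨x, hx, hmin⟩ := Finset.exists_min_image _ r hcand
  refine ⟨x, (Finset.mem_filter.mp hx).2, fun y hy => ?_⟩
  by_contra! h
  exact absurd (hmin y (by simpa using h)) (not_le.mpr hy)

variable [DecidableEq V] {x : V}

lemma ascends_of_mem_insert_upperNeighborFinset {w c : V} (hw : w ∈ ascendersTo Γ r x)
    (hc : c ∈ insert x (upperNeighborFinset Γ r x)) : Ascends Γ r w c := by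
  rw [mem_ascendersTo] at hw
  rcases Finset.mem_insert.mp hc with rfl | hc
  · exact hw
  · exact hw.tail (mem_upperNeighborFinset.mp hc)

variable (hΓ : IsPerfectEliminationOrder Γ r)
include hΓ

lemma isClique_insert_upperNeighborFinset :
    Γ.IsClique (insert x (upperNeighborFinset Γ r x) : Finset V) := by
  rw [Finset.coe_insert, coe_upperNeighborFinset]
  exact (hΓ.isClique_upper x).insert fun b hb _ => hb.1

open Classical in
/-- A component of `G[ascendersTo x \ {x}]` lies in the set of ascenders to its top vertex. -/
lemma three_mul_card_reachableWithin_lt (hle : G ≤ Γ)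
    (hbelow : ∀ y, r y < r x → 3 * (ascendersTo Γ r y).card < Fintype.card V)
    {b : V} (hb : b ∈ (ascendersTo Γ r x).erase x) :
    3 * (((ascendersTo Γ r x).erase x).filter
      (ReachableWithin G ((ascendersTo Γ r x).erase x) b)).card < Fintype.card V := by
  set A₀ := (ascendersTo Γ r x).erase x
  set K := A₀.filter (ReachableWithin G A₀ b)
  obtain ⟨y, hyK, hymax⟩ :=
    Finset.exists_max_image K r ⟨b, Finset.mem_filter.mpr ⟨hb, .refl hb⟩⟩
  have hmemK {u} (hu : ReachableWithin G A₀ b u) : u ∈ K :=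
    Finset.mem_filter.mpr ⟨hu.mem_right, hu⟩
  have hKy : K ⊆ ascendersTo Γ r y := by
    intro c hc
    obtain ⟨p, hp⟩ := (Finset.mem_filter.mp hc).2.symm.trans (Finset.mem_filter.mp hyK).2
    have hbc := (Finset.mem_filter.mp hc).2
    exact mem_ascendersTo.mpr <| ascends_of_walk hΓ hle p fun u hu =>
      hymax u (hmemK (hbc.trans (ReachableWithin.of_mem_support hp hu)))
  have hyx : r y < r x := by
    obtain ⟨hyx, hyW⟩ := Finset.mem_erase.mp (Finset.mem_filter.mp hyK).1
    exact lt_of_le_of_ne (mem_ascendersTo.mp hyW).rank_le (hΓ.injective.ne hyx)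
  exact (Nat.mul_le_mul_left 3 (Finset.card_le_card hKy)).trans_lt (hbelow y hyx)

lemma isBalancedSepOn_insert_upperNeighborFinset (hle : G ≤ Γ)
    (hx : Fintype.card V ≤ 3 * (ascendersTo Γ r x).card)
    (hbelow : ∀ y, r y < r x → 3 * (ascendersTo Γ r y).card < Fintype.card V) :
    IsBalancedSepOn G Finset.univ (insert x (upperNeighborFinset Γ r x)) := by
  classical
  set W := ascendersTo Γ r x
  set C := insert x (upperNeighborFinset Γ r x)
  set A₀ := W.erase x
  have hxC : x ∈ C := Finset.mem_insert_self x _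
  have hA₀C : Disjoint A₀ C := by
    refine Finset.disjoint_left.mpr fun u hu huC => ?_
    obtain ⟨hux, huW⟩ := Finset.mem_erase.mp hu
    rcases Finset.mem_insert.mp huC with rfl | hu
    · exact hux rfl
    · exact absurd (mem_ascendersTo.mp huW).rank_le
        (not_le.mpr (mem_upperNeighborFinset.mp hu).2)
  obtain ⟨A, hAA₀, hAcl, hAL, hAbig⟩ := A₀.exists_closed_subset_card_le (ReachableWithin G A₀)
    (fun b hb => .refl hb) (fun _ _ _ => ReachableWithin.trans)
    (2 * Fintype.card V / 3) ((Fintype.card V - 1) / 3)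
    fun b hb => by
      have : 3 * (A₀.filter (ReachableWithin G A₀ b)).card < Fintype.card V :=
        three_mul_card_reachableWithin_lt hΓ hle hbelow hb
      omega
  have hxA : x ∉ A := fun h => Finset.disjoint_left.mp hA₀C (hAA₀ h) hxC
  refine isBalancedSepOn_univ_of_closed (hA₀C.mono_left hAA₀) (fun a ha b hab => ?_)
    (by omega) ?_
  · have haW : a ∈ W := Finset.mem_of_mem_erase (hAA₀ ha)
    rcases (mem_ascendersTo.mp haW).ascends_or_upper_of_adj hΓ (hle hab) with hb | hb
    · rcases eq_or_ne b x with rfl | hbx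
      · exact Finset.mem_union_right A hxC
      have hbA₀ : b ∈ A₀ := Finset.mem_erase.mpr ⟨hbx, mem_ascendersTo.mpr hb⟩
      exact Finset.mem_union_left C (hAcl a ha b hbA₀ (.of_adj (hAA₀ ha) hbA₀ hab))
    · exact Finset.mem_union_right A
        (Finset.mem_insert_of_mem (mem_upperNeighborFinset.mpr hb))
  · have hB : (Finset.univ \ (A ∪ C)).card = Fintype.card V - (A ∪ C).card := by
      rw [Finset.card_sdiff_of_subset (Finset.subset_univ _), Finset.card_univ]
    rcases hAbig with hAA₀ | hAbig
    · have hW : W ⊆ A ∪ C := fun w hw => by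
        rcases eq_or_ne w x with rfl | hwx
        · exact Finset.mem_union_right _ hxC
        · exact Finset.mem_union_left _ (hAA₀ ▸ Finset.mem_erase.mpr ⟨hwx, hw⟩)
      have := Finset.card_le_card hW
      omega
    · have : A.card + 1 ≤ (A ∪ C).card := by
        rw [← Finset.card_insert_of_notMem hxA]
        exact Finset.card_le_card (Finset.insert_subset (Finset.mem_union_right _ hxC)
          Finset.subset_union_left)
      omega

end Separator

theorem stmt2_general {V : Type*} [Fintype V] [DecidableEq V] {n : ℕ}
    (G : SimpleGraph V) (hG : G.Connected) (π : Fin n ≃ V)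
    (S : Finset V)
    (hmin : ∀ S' : Finset V, IsBalancedSepOn G Finset.univ S' → S.card ≤ S'.card) :
    ∃ C W : Finset V, S.card ≤ C.card ∧ n ≤ 3 * W.card ∧
      (chGraph G π).IsClique (C : Set V) ∧
      ∀ v ∈ W, ∀ x ∈ C, UpReach G π v x := by
  have hΓ := isPerfectEliminationOrder_chGraph G π
  have hcard : Fintype.card V = n := by rw [Fintype.card_congr π.symm, Fintype.card_fin]
  obtain ⟨x, hx, hbelow⟩ := exists_minimal_third_ascendersTo hΓ (le_chGraph G π) hG
  exact ⟨insert x (upperNeighborFinset _ _ x), ascendersTo _ _ x,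
    hmin _ (isBalancedSepOn_insert_upperNeighborFinset hΓ (le_chGraph G π) hx hbelow),
    hcard ▸ hx, isClique_insert_upperNeighborFinset hΓ,
    fun _ hv _ hc => ascends_of_mem_insert_upperNeighborFinset hv hc⟩

/-- If `S` is a minimum balanced separator of the connected graph `G`,
then for every contraction order `π` there is a clique `C` of `G*π` with at least
`|S|` vertices and a set `W` of at least `n / 3` vertices such that for every
`v ∈ W` every vertex of `C` lies in the search space `SS v` of `G^∧π`. -/
theorem stmt2 {V : Type*} [Fintype V] [DecidableEq V] {n : ℕ}
    (G : SimpleGraph V) (hG : G.Connected) (π : Fin n ≃ V)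
    (S : Finset V) (hS : IsBalancedSepOn G Finset.univ S)
    (hmin : ∀ S' : Finset V, IsBalancedSepOn G Finset.univ S' → S.card ≤ S'.card) :
    ∃ C W : Finset V, S.card ≤ C.card ∧ n ≤ 3 * W.card ∧
      (chGraph G π).IsClique (C : Set V) ∧
      ∀ v ∈ W, ∀ x ∈ C, UpReach G π v x :=
  stmt2_general G hG π S hmin
end
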